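/- arXiv:1406.3758 — 2 statements merged into one kernel-verified Lean document; each statement's English description precedes it below -/
import Mathlib

section
/- RWD satisfies the triangle inequality: for any weighted point clouds (P,μ^P), (Q,μ^Q), (S,μ^S) in ℝ^n, RWD((P,μ^P),(Q,μ^Q)) ≤ RWD((P,μ^P),(S,μ^S)) + RWD((S,μ^S),(Q,μ^Q)). -/
open Matrix

/-- The discrete admissible set of couplings between probability vectors. -/
def ADM {a b : ℕ} (μP : Fin a → ℝ) (μQ : Fin b → ℝ) : Set (Matrix (Fin a) (Fin b) ℝ) :=
  {σ | (∀ i j, 0 ≤ σ i j) ∧ (∀ i, ∑ j, σ i j = μP i) ∧ (∀ j, ∑ i, σ i j = μQ j)}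

/-- The transport cost `Σ_{i,j} σ_{ij} ‖p_i R − q_j‖²`. -/
def cost {n a b : ℕ} (p : Fin a → Fin n → ℝ) (q : Fin b → Fin n → ℝ)
    (R : Matrix (Fin n) (Fin n) ℝ) (σ : Matrix (Fin a) (Fin b) ℝ) : ℝ :=
  ∑ i, ∑ j, σ i j * ∑ k, (Matrix.vecMul (p i) R k - q j k) ^ 2

/-- The robust Wasserstein distance between two weighted point clouds in `ℝ^n`:
`RWD((P,μ^P),(Q,μ^Q))² = min_{R ∈ O(n), σ ∈ ADM(μ^P,μ^Q)} Σ_{i,j} σ_{ij}‖p_i R − q_j‖²`. -/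
noncomputable def RWD {n a b : ℕ} (p : Fin a → Fin n → ℝ) (μP : Fin a → ℝ)
    (q : Fin b → Fin n → ℝ) (μQ : Fin b → ℝ) : ℝ :=
  Real.sqrt (sInf {c : ℝ | ∃ R : Matrix (Fin n) (Fin n) ℝ, R * Rᵀ = 1 ∧
    ∃ σ ∈ ADM μP μQ, c = cost p q R σ})

/-- Cauchy–Schwarz with square roots. -/
lemma sum_mul_le_sqrt_mul_sqrt {ι : Type*} (s : Finset ι) (f g : ι → ℝ) :
    ∑ i ∈ s, f i * g i ≤ Real.sqrt (∑ i ∈ s, f i ^ 2) * Real.sqrt (∑ i ∈ s, g i ^ 2) := by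
  have h := Finset.sum_mul_sq_le_sq_mul_sq s f g
  calc ∑ i ∈ s, f i * g i ≤ |∑ i ∈ s, f i * g i| := le_abs_self _
    _ = Real.sqrt ((∑ i ∈ s, f i * g i) ^ 2) := (Real.sqrt_sq_eq_abs _).symm
    _ ≤ Real.sqrt ((∑ i ∈ s, f i ^ 2) * ∑ i ∈ s, g i ^ 2) := Real.sqrt_le_sqrt h
    _ = _ := Real.sqrt_mul (Finset.sum_nonneg fun i _ => sq_nonneg _) _

/-- Weighted Minkowski-type inequality (squared form). -/
lemma weighted_minkowski {ι : Type*} (s : Finset ι) (w x y : ι → ℝ)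
    (hw : ∀ i ∈ s, 0 ≤ w i) :
    ∑ i ∈ s, w i * (x i + y i) ^ 2 ≤
      (Real.sqrt (∑ i ∈ s, w i * x i ^ 2) + Real.sqrt (∑ i ∈ s, w i * y i ^ 2)) ^ 2 := by
  set A := ∑ i ∈ s, w i * x i ^ 2 with hA
  set B := ∑ i ∈ s, w i * y i ^ 2 with hB
  have hA0 : 0 ≤ A := Finset.sum_nonneg fun i hi => mul_nonneg (hw i hi) (sq_nonneg _)
  have hB0 : 0 ≤ B := Finset.sum_nonneg fun i hi => mul_nonneg (hw i hi) (sq_nonneg _)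
  have key : ∑ i ∈ s, w i * (x i * y i) ≤ Real.sqrt A * Real.sqrt B := by
    have h := sum_mul_le_sqrt_mul_sqrt s (fun i => Real.sqrt (w i) * x i)
      (fun i => Real.sqrt (w i) * y i)
    have e1 : ∑ i ∈ s, (Real.sqrt (w i) * x i) * (Real.sqrt (w i) * y i)
        = ∑ i ∈ s, w i * (x i * y i) := by
      refine Finset.sum_congr rfl fun i hi => ?_
      rw [mul_mul_mul_comm, Real.mul_self_sqrt (hw i hi)]
    have e2 : ∑ i ∈ s, (Real.sqrt (w i) * x i) ^ 2 = A := by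
      refine Finset.sum_congr rfl fun i hi => ?_
      rw [mul_pow, Real.sq_sqrt (hw i hi)]
    have e3 : ∑ i ∈ s, (Real.sqrt (w i) * y i) ^ 2 = B := by
      refine Finset.sum_congr rfl fun i hi => ?_
      rw [mul_pow, Real.sq_sqrt (hw i hi)]
    rw [e1, e2, e3] at h
    exact h
  have expand : ∑ i ∈ s, w i * (x i + y i) ^ 2
      = A + 2 * ∑ i ∈ s, w i * (x i * y i) + B := by
    rw [hA, hB, Finset.mul_sum, ← Finset.sum_add_distrib, ← Finset.sum_add_distrib]
    refine Finset.sum_congr rfl fun i hi => ?_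
    ring
  rw [expand]
  have hrhs : (Real.sqrt A + Real.sqrt B) ^ 2
      = A + 2 * (Real.sqrt A * Real.sqrt B) + B := by
    rw [add_sq, Real.sq_sqrt hA0, Real.sq_sqrt hB0]
    ring
  rw [hrhs]
  linarith

/-- Orthogonal matrices preserve the sum of squares under `vecMul`. -/
lemma vecMul_orth_sum_sq {n : ℕ} (R : Matrix (Fin n) (Fin n) ℝ) (hR : R * Rᵀ = 1)
    (v : Fin n → ℝ) : ∑ k, (vecMul v R k) ^ 2 = ∑ k, (v k) ^ 2 := by
  have h1 : ∀ x : Fin n → ℝ, ∑ k, (x k) ^ 2 = x ⬝ᵥ x := by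
    intro x; simp [dotProduct, sq]
  rw [h1, h1]
  calc vecMul v R ⬝ᵥ vecMul v R = vecMul v R ⬝ᵥ (Rᵀ *ᵥ v) := by rw [Matrix.mulVec_transpose]
    _ = vecMul (vecMul v R) Rᵀ ⬝ᵥ v := by rw [Matrix.dotProduct_mulVec]
    _ = vecMul v (R * Rᵀ) ⬝ᵥ v := by rw [Matrix.vecMul_vecMul]
    _ = v ⬝ᵥ v := by rw [hR, Matrix.vecMul_one]

lemma triple_sum_eq {α β γ : Type*} [Fintype α] [Fintype β] [Fintype γ] (f : α → β → γ → ℝ) :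
    ∑ t : α × β × γ, f t.1 t.2.1 t.2.2 = ∑ i, ∑ j, ∑ k, f i j k := by
  rw [Fintype.sum_prod_type]
  exact Finset.sum_congr rfl fun i _ => Fintype.sum_prod_type _

lemma cost_nonneg' {n a b : ℕ} (p : Fin a → Fin n → ℝ) (q : Fin b → Fin n → ℝ)
    (R : Matrix (Fin n) (Fin n) ℝ) (σ : Matrix (Fin a) (Fin b) ℝ)
    (hσ : ∀ i j, 0 ≤ σ i j) : 0 ≤ cost p q R σ :=
  Finset.sum_nonneg fun i _ => Finset.sum_nonneg fun j _ =>
    mul_nonneg (hσ i j) (Finset.sum_nonneg fun _ _ => sq_nonneg _)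

lemma sqrt_add_le' {x y : ℝ} (hx : 0 ≤ x) (hy : 0 ≤ y) :
    Real.sqrt (x + y) ≤ Real.sqrt x + Real.sqrt y := by
  rw [show Real.sqrt x + Real.sqrt y
      = Real.sqrt ((Real.sqrt x + Real.sqrt y) ^ 2) from
    (Real.sqrt_sq (add_nonneg (Real.sqrt_nonneg _) (Real.sqrt_nonneg _))).symm]
  apply Real.sqrt_le_sqrt
  have := Real.sq_sqrt hx
  have := Real.sq_sqrt hy
  nlinarith [Real.sqrt_nonneg x, Real.sqrt_nonneg y]

/-- Gluing couplings: the core construction for the triangle inequality. -/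
lemma glue_lemma {n a s b : ℕ} (p : Fin a → Fin n → ℝ) (μP : Fin a → ℝ)
    (st : Fin s → Fin n → ℝ) (μS : Fin s → ℝ)
    (q : Fin b → Fin n → ℝ) (μQ : Fin b → ℝ) (hS0 : ∀ j, 0 < μS j)
    (R1 R2 : Matrix (Fin n) (Fin n) ℝ) (hR2 : R2 * R2ᵀ = 1)
    (σ1 : Matrix (Fin a) (Fin s) ℝ) (σ2 : Matrix (Fin s) (Fin b) ℝ)
    (h1 : σ1 ∈ ADM μP μS) (h2 : σ2 ∈ ADM μS μQ) :
    ∃ σ ∈ ADM μP μQ, cost p q (R1 * R2) σ ≤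
      (Real.sqrt (cost p st R1 σ1) + Real.sqrt (cost st q R2 σ2)) ^ 2 := by
  obtain ⟨h1n, h1r, h1c⟩ := h1
  obtain ⟨h2n, h2r, h2c⟩ := h2
  set w : Fin a → Fin s → Fin b → ℝ := fun i j k => σ1 i j / μS j * σ2 j k with hw
  have hwnn : ∀ i j k, 0 ≤ w i j k := fun i j k =>
    mul_nonneg (div_nonneg (h1n i j) (hS0 j).le) (h2n j k)
  have hwk : ∀ i j, ∑ k, w i j k = σ1 i j := by
    intro i j
    rw [show ∑ k, w i j k = σ1 i j / μS j * ∑ k, σ2 j k from (Finset.mul_sum _ _ _).symm,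
      h2r j, div_mul_cancel₀ _ (hS0 j).ne']
  have hwi : ∀ j k, ∑ i, w i j k = σ2 j k := by
    intro j k
    have h : ∑ i, w i j k = (∑ i, σ1 i j) / μS j * σ2 j k := by
      rw [Finset.sum_div, Finset.sum_mul]
    rw [h, h1c j, div_self (hS0 j).ne', one_mul]
  set σ : Matrix (Fin a) (Fin b) ℝ := fun i k => ∑ j, w i j k with hσdef
  have hσADM : σ ∈ ADM μP μQ := by
    refine ⟨fun i k => Finset.sum_nonneg fun j _ => hwnn i j k, fun i => ?_, fun k => ?_⟩
    · rw [show ∑ k, σ i k = ∑ j, ∑ k, w i j k from Finset.sum_comm]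
      rw [show ∑ j, ∑ k, w i j k = ∑ j, σ1 i j from
        Finset.sum_congr rfl fun j _ => hwk i j, h1r i]
    · rw [show ∑ i, σ i k = ∑ j, ∑ i, w i j k from Finset.sum_comm]
      rw [show ∑ j, ∑ i, w i j k = ∑ j, σ2 j k from
        Finset.sum_congr rfl fun j _ => hwi j k, h2c k]
  refine ⟨σ, hσADM, ?_⟩
  set A : Fin a → Fin s → ℝ := fun i j => ∑ m, (vecMul (p i) R1 m - st j m) ^ 2 with hAdef
  set B : Fin s → Fin b → ℝ := fun j k => ∑ m, (vecMul (st j) R2 m - q k m) ^ 2 with hBdef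
  have hAnn : ∀ i j, 0 ≤ A i j := fun i j => Finset.sum_nonneg fun _ _ => sq_nonneg _
  have hBnn : ∀ j k, 0 ≤ B j k := fun j k => Finset.sum_nonneg fun _ _ => sq_nonneg _
  set C : Fin a → Fin b → ℝ := fun i k => ∑ m, (vecMul (p i) (R1 * R2) m - q k m) ^ 2 with hCdef
  have hpt : ∀ i j k, C i k ≤ (Real.sqrt (A i j) + Real.sqrt (B j k)) ^ 2 := by
    intro i j k
    have hdecomp : ∀ m, vecMul (p i) (R1 * R2) m - q k m =
        (vecMul (vecMul (p i) R1 - st j) R2 m) + (vecMul (st j) R2 m - q k m) := by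
      intro m
      rw [Matrix.sub_vecMul, Matrix.vecMul_vecMul]
      simp [Pi.sub_apply]
    have h := weighted_minkowski (Finset.univ : Finset (Fin n)) (fun _ => (1 : ℝ))
      (fun m => vecMul (vecMul (p i) R1 - st j) R2 m)
      (fun m => vecMul (st j) R2 m - q k m) (fun _ _ => zero_le_one)
    simp only [one_mul] at h
    have hx : ∑ m, (vecMul (vecMul (p i) R1 - st j) R2 m) ^ 2 = A i j := by
      rw [vecMul_orth_sum_sq R2 hR2]
      refine Finset.sum_congr rfl fun m _ => ?_
      simp [Pi.sub_apply]
    have hC : C i k = ∑ m, ((vecMul (vecMul (p i) R1 - st j) R2 m)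
        + (vecMul (st j) R2 m - q k m)) ^ 2 := by
      refine Finset.sum_congr rfl fun m _ => ?_
      rw [← hdecomp m]
    rw [hC, ← hx]
    exact h
  have hcost : cost p q (R1 * R2) σ = ∑ i, ∑ j, ∑ k, w i j k * C i k := by
    have key : ∀ i, ∑ j, ∑ k, w i j k * C i k = ∑ k, σ i k * C i k := by
      intro i
      rw [Finset.sum_comm]
      exact Finset.sum_congr rfl fun k _ => (Finset.sum_mul _ _ _).symm
    unfold cost
    exact Finset.sum_congr rfl fun i _ => (key i).symm
  have hc1 : ∑ t : Fin a × Fin s × Fin b, w t.1 t.2.1 t.2.2 * A t.1 t.2.1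
      = cost p st R1 σ1 := by
    rw [triple_sum_eq (fun i j k => w i j k * A i j)]
    have e : ∀ i, ∑ j, ∑ k, w i j k * A i j = ∑ j, σ1 i j * A i j := by
      intro i
      refine Finset.sum_congr rfl fun j _ => ?_
      rw [← Finset.sum_mul, hwk]
    rw [Finset.sum_congr rfl fun i _ => e i]
    rfl
  have hc2 : ∑ t : Fin a × Fin s × Fin b, w t.1 t.2.1 t.2.2 * B t.2.1 t.2.2
      = cost st q R2 σ2 := by
    rw [triple_sum_eq (fun i j k => w i j k * B j k), Finset.sum_comm]
    have e : ∀ j, ∑ i, ∑ k, w i j k * B j k = ∑ k, σ2 j k * B j k := by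
      intro j
      rw [Finset.sum_comm]
      refine Finset.sum_congr rfl fun k _ => ?_
      rw [← Finset.sum_mul, hwi]
    rw [Finset.sum_congr rfl fun j _ => e j]
    rfl
  calc cost p q (R1 * R2) σ = ∑ i, ∑ j, ∑ k, w i j k * C i k := hcost
    _ ≤ ∑ i, ∑ j, ∑ k, w i j k * (Real.sqrt (A i j) + Real.sqrt (B j k)) ^ 2 :=
        Finset.sum_le_sum fun i _ => Finset.sum_le_sum fun j _ => Finset.sum_le_sum fun k _ =>
          mul_le_mul_of_nonneg_left (hpt i j k) (hwnn i j k)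
    _ = ∑ t : Fin a × Fin s × Fin b, w t.1 t.2.1 t.2.2 *
          (Real.sqrt (A t.1 t.2.1) + Real.sqrt (B t.2.1 t.2.2)) ^ 2 :=
        (triple_sum_eq (fun i j k => w i j k * (Real.sqrt (A i j) + Real.sqrt (B j k)) ^ 2)).symm
    _ ≤ (Real.sqrt (∑ t : Fin a × Fin s × Fin b, w t.1 t.2.1 t.2.2 * A t.1 t.2.1)
          + Real.sqrt (∑ t : Fin a × Fin s × Fin b, w t.1 t.2.1 t.2.2 * B t.2.1 t.2.2)) ^ 2 := by
        have h := weighted_minkowski (Finset.univ : Finset (Fin a × Fin s × Fin b))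
          (fun t => w t.1 t.2.1 t.2.2) (fun t => Real.sqrt (A t.1 t.2.1))
          (fun t => Real.sqrt (B t.2.1 t.2.2)) (fun t _ => hwnn t.1 t.2.1 t.2.2)
        have eA : ∑ t : Fin a × Fin s × Fin b, w t.1 t.2.1 t.2.2 * Real.sqrt (A t.1 t.2.1) ^ 2
            = ∑ t : Fin a × Fin s × Fin b, w t.1 t.2.1 t.2.2 * A t.1 t.2.1 :=
          Finset.sum_congr rfl fun t _ => by rw [Real.sq_sqrt (hAnn _ _)]
        have eB : ∑ t : Fin a × Fin s × Fin b, w t.1 t.2.1 t.2.2 * Real.sqrt (B t.2.1 t.2.2) ^ 2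
            = ∑ t : Fin a × Fin s × Fin b, w t.1 t.2.1 t.2.2 * B t.2.1 t.2.2 :=
          Finset.sum_congr rfl fun t _ => by rw [Real.sq_sqrt (hBnn _ _)]
        rw [eA, eB] at h
        exact h
    _ = (Real.sqrt (cost p st R1 σ1) + Real.sqrt (cost st q R2 σ2)) ^ 2 := by rw [hc1, hc2]

lemma rwd_set_nonempty {n a b : ℕ} (p : Fin a → Fin n → ℝ) (μP : Fin a → ℝ)
    (q : Fin b → Fin n → ℝ) (μQ : Fin b → ℝ)
    (hP0 : ∀ i, 0 < μP i) (hQ0 : ∀ k, 0 < μQ k)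
    (hP1 : ∑ i, μP i = 1) (hQ1 : ∑ k, μQ k = 1) :
    {c : ℝ | ∃ R : Matrix (Fin n) (Fin n) ℝ, R * Rᵀ = 1 ∧
      ∃ σ ∈ ADM μP μQ, c = cost p q R σ}.Nonempty := by
  refine ⟨cost p q 1 (fun i j => μP i * μQ j), 1, by simp, fun i j => μP i * μQ j, ?_, rfl⟩
  refine ⟨fun i j => mul_nonneg (hP0 i).le (hQ0 j).le, fun i => ?_, fun j => ?_⟩
  · rw [← Finset.mul_sum, hQ1, mul_one]
  · rw [← Finset.sum_mul, hP1, one_mul]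

lemma rwd_set_nonneg {n a b : ℕ} (p : Fin a → Fin n → ℝ) (μP : Fin a → ℝ)
    (q : Fin b → Fin n → ℝ) (μQ : Fin b → ℝ) :
    ∀ c ∈ {c : ℝ | ∃ R : Matrix (Fin n) (Fin n) ℝ, R * Rᵀ = 1 ∧
      ∃ σ ∈ ADM μP μQ, c = cost p q R σ}, (0 : ℝ) ≤ c := by
  rintro c ⟨R, hR, σ, hσ, rfl⟩
  exact cost_nonneg' p q R σ hσ.1

/-- RWD satisfies the triangle inequality for weighted point clouds
(finite lists of distinct points with positive weights summing to 1) in `ℝ^n`. -/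
theorem rwd_triangle {n a s b : ℕ} (p : Fin a → Fin n → ℝ) (μP : Fin a → ℝ)
    (st : Fin s → Fin n → ℝ) (μS : Fin s → ℝ)
    (q : Fin b → Fin n → ℝ) (μQ : Fin b → ℝ)
    (hpinj : Function.Injective p) (hsinj : Function.Injective st)
    (hqinj : Function.Injective q)
    (hP0 : ∀ i, 0 < μP i) (hS0 : ∀ j, 0 < μS j) (hQ0 : ∀ k, 0 < μQ k)
    (hP1 : ∑ i, μP i = 1) (hS1 : ∑ j, μS j = 1) (hQ1 : ∑ k, μQ k = 1) :
    RWD p μP q μQ ≤ RWD p μP st μS + RWD st μS q μQ := by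
  set SPQ := {c : ℝ | ∃ R : Matrix (Fin n) (Fin n) ℝ, R * Rᵀ = 1 ∧
    ∃ σ ∈ ADM μP μQ, c = cost p q R σ} with hSPQ
  set SPS := {c : ℝ | ∃ R : Matrix (Fin n) (Fin n) ℝ, R * Rᵀ = 1 ∧
    ∃ σ ∈ ADM μP μS, c = cost p st R σ} with hSPS
  set SSQ := {c : ℝ | ∃ R : Matrix (Fin n) (Fin n) ℝ, R * Rᵀ = 1 ∧
    ∃ σ ∈ ADM μS μQ, c = cost st q R σ} with hSSQ
  have hne1 : SPS.Nonempty := rwd_set_nonempty p μP st μS hP0 hS0 hP1 hS1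
  have hne2 : SSQ.Nonempty := rwd_set_nonempty st μS q μQ hS0 hQ0 hS1 hQ1
  have hnn1 := rwd_set_nonneg p μP st μS
  have hnn2 := rwd_set_nonneg st μS q μQ
  have hnn0 := rwd_set_nonneg p μP q μQ
  have hbdd0 : BddBelow SPQ := ⟨0, fun c hc => hnn0 c hc⟩
  have hI1 : 0 ≤ sInf SPS := le_csInf hne1 (hnn1 ·)
  have hI2 : 0 ≤ sInf SSQ := le_csInf hne2 (hnn2 ·)
  show Real.sqrt (sInf SPQ) ≤ Real.sqrt (sInf SPS) + Real.sqrt (sInf SSQ)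
  apply le_of_forall_pos_le_add
  intro δ hδ
  have hε : (0 : ℝ) < (δ / 2) ^ 2 := by positivity
  obtain ⟨c1, hc1mem, hc1lt⟩ := Real.lt_sInf_add_pos hne1 hε
  obtain ⟨c2, hc2mem, hc2lt⟩ := Real.lt_sInf_add_pos hne2 hε
  obtain ⟨R1, hR1, σ1, hσ1, rfl⟩ := hc1mem
  obtain ⟨R2, hR2, σ2, hσ2, rfl⟩ := hc2mem
  obtain ⟨σ, hσADM, hglue⟩ := glue_lemma p μP st μS q μQ hS0 R1 R2 hR2 σ1 σ2 hσ1 hσ2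
  have hRorth : (R1 * R2) * (R1 * R2)ᵀ = 1 := by
    rw [Matrix.transpose_mul, show R1 * R2 * (R2ᵀ * R1ᵀ) = R1 * (R2 * R2ᵀ) * R1ᵀ by
      simp [mul_assoc], hR2, mul_one, hR1]
  have hmem0 : cost p q (R1 * R2) σ ∈ SPQ := ⟨R1 * R2, hRorth, σ, hσADM, rfl⟩
  have step1 : Real.sqrt (sInf SPQ) ≤ Real.sqrt (cost p q (R1 * R2) σ) :=
    Real.sqrt_le_sqrt (csInf_le hbdd0 hmem0)
  have step2 : Real.sqrt (cost p q (R1 * R2) σ)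
      ≤ Real.sqrt (cost p st R1 σ1) + Real.sqrt (cost st q R2 σ2) := by
    calc Real.sqrt (cost p q (R1 * R2) σ)
        ≤ Real.sqrt ((Real.sqrt (cost p st R1 σ1) + Real.sqrt (cost st q R2 σ2)) ^ 2) :=
          Real.sqrt_le_sqrt hglue
      _ = _ := Real.sqrt_sq (add_nonneg (Real.sqrt_nonneg _) (Real.sqrt_nonneg _))
  have hb1 : Real.sqrt (cost p st R1 σ1) ≤ Real.sqrt (sInf SPS) + δ / 2 := by
    calc Real.sqrt (cost p st R1 σ1) ≤ Real.sqrt (sInf SPS + (δ / 2) ^ 2) :=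
          Real.sqrt_le_sqrt hc1lt.le
      _ ≤ Real.sqrt (sInf SPS) + Real.sqrt ((δ / 2) ^ 2) := sqrt_add_le' hI1 hε.le
      _ = Real.sqrt (sInf SPS) + δ / 2 := by rw [Real.sqrt_sq (by positivity)]
  have hb2 : Real.sqrt (cost st q R2 σ2) ≤ Real.sqrt (sInf SSQ) + δ / 2 := by
    calc Real.sqrt (cost st q R2 σ2) ≤ Real.sqrt (sInf SSQ + (δ / 2) ^ 2) :=
          Real.sqrt_le_sqrt hc2lt.le
      _ ≤ Real.sqrt (sInf SSQ) + Real.sqrt ((δ / 2) ^ 2) := sqrt_add_le' hI2 hε.le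
      _ = Real.sqrt (sInf SSQ) + δ / 2 := by rw [Real.sqrt_sq (by positivity)]
  linarith
end

section
/- For probability measures μ, ν on ℝ with cumulative distribution functions F_μ, F_ν and generalized inverses F_μ⁻¹(t) = inf{x : F_μ(x) > t}, the optimal value of the 1D quadratic optimal transport problem equals ∫₀¹ (F_μ⁻¹(s) − F_ν⁻¹(s))² ds, i.e., min_{σ ∈ ADM(μ,ν)} ∫_{ℝ×ℝ} (x−y)² dσ(x,y) = ∫₀¹ (F_μ⁻¹(s) − F_ν⁻¹(s))² ds. -/
open MeasureTheory

/-- The cumulative distribution function `F_μ(x) = μ((−∞, x])`. -/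
noncomputable def cdfFun (μ : Measure ℝ) (x : ℝ) : ℝ := (μ (Set.Iic x)).toReal

/-- The generalized inverse `F_μ⁻¹(t) = inf {x : F_μ(x) > t}`. -/
noncomputable def quantileFun (μ : Measure ℝ) (t : ℝ) : ℝ :=
  sInf {x : ℝ | t < cdfFun μ x}

/-!
For a coupling `σ` of `μ` and `ν`, `∫ (x - y)² dσ` is the sum of the second moments minus
`2 ∫ x y dσ`, and by Hoeffding's formula `∫ x y dσ` depends on `σ` only through the quadrant
probabilities `σ ((s, ∞) × (t, ∞))`, and increasingly so. These are at most
`min (μ (s, ∞)) (ν (t, ∞))`, and the quantile coupling `u ↦ (F_μ⁻¹ u, F_ν⁻¹ u)` of Lebesgue measure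
on `(0, 1)` attains this bound for all `s, t` at once, because the superlevel sets of two monotone
functions are nested. So the quantile coupling is optimal, and its cost is the stated integral.
-/

namespace OneDimOptimalTransport

open Set ProbabilityTheory

section Quantile

variable (μ : Measure ℝ) [IsProbabilityMeasure μ]

lemma cdfFun_eq_cdf (x : ℝ) : cdfFun μ x = cdf μ x := (cdf_eq_real μ x).symm

lemma nonempty_setOf_lt_cdfFun {t : ℝ} (ht : t < 1) : {x | t < cdfFun μ x}.Nonempty := by
  simpa only [Set.Nonempty, mem_ofPred_eq, cdfFun_eq_cdf] using
    ((tendsto_cdf_atTop μ).eventually_const_lt ht).exists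

lemma bddBelow_setOf_lt_cdfFun {t : ℝ} (ht : 0 < t) : BddBelow {x | t < cdfFun μ x} := by
  obtain ⟨x₀, hx₀⟩ := ((tendsto_cdf_atBot μ).eventually_lt_const ht).exists
  refine ⟨x₀, fun x hx => le_of_not_gt fun hlt => ?_⟩
  have hx : t < cdf μ x := by rwa [← cdfFun_eq_cdf]
  exact hx.not_ge ((monotone_cdf μ hlt.le).trans hx₀.le)

lemma quantileFun_le_of_lt_cdfFun {t x : ℝ} (ht : 0 < t) (h : t < cdfFun μ x) :
    quantileFun μ t ≤ x :=
  csInf_le (bddBelow_setOf_lt_cdfFun μ ht) h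

lemma le_cdfFun_of_quantileFun_le {t x : ℝ} (ht : t < 1) (h : quantileFun μ t ≤ x) :
    t ≤ cdfFun μ x := by
  rw [cdfFun_eq_cdf, ← (cdf μ).iInf_Ioi_eq x]
  refine le_ciInf fun ⟨y, hxy⟩ => ?_
  obtain ⟨z, hz, hzy⟩ := exists_lt_of_csInf_lt (nonempty_setOf_lt_cdfFun μ ht) (h.trans_lt hxy)
  have hz : t < cdf μ z := by rwa [← cdfFun_eq_cdf]
  exact hz.le.trans (monotone_cdf μ hzy.le)

lemma monotoneOn_quantileFun : MonotoneOn (quantileFun μ) (Ioo 0 1) :=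
  fun _ ha _ hb hab => csInf_le_csInf (bddBelow_setOf_lt_cdfFun μ ha.1)
    (nonempty_setOf_lt_cdfFun μ hb.2) fun _ hx => hab.trans_lt hx

lemma aemeasurable_quantileFun : AEMeasurable (quantileFun μ) (volume.restrict (Ioo 0 1)) :=
  aemeasurable_restrict_of_monotoneOn measurableSet_Ioo (monotoneOn_quantileFun μ)

theorem map_quantileFun : (volume.restrict (Ioo 0 1)).map (quantileFun μ) = μ := by
  refine Measure.ext_of_Iic _ _ fun x => ?_
  rw [Measure.map_apply_of_aemeasurable (aemeasurable_quantileFun μ) measurableSet_Iic,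
    Measure.restrict_apply' measurableSet_Ioo]
  have hF : cdfFun μ x ≤ 1 := cdfFun_eq_cdf μ x ▸ cdf_le_one μ x
  have hlower : Ioo 0 (cdfFun μ x) ⊆ quantileFun μ ⁻¹' Iic x ∩ Ioo 0 1 := fun u hu =>
    ⟨quantileFun_le_of_lt_cdfFun μ hu.1 hu.2, hu.1, hu.2.trans_le hF⟩
  have hupper : quantileFun μ ⁻¹' Iic x ∩ Ioo 0 1 ⊆ Ioc 0 (cdfFun μ x) := fun u hu =>
    ⟨hu.2.1, le_cdfFun_of_quantileFun_le μ hu.2.2 hu.1⟩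
  have hvol := le_antisymm ((measure_mono hupper).trans_eq Real.volume_Ioc)
    (Real.volume_Ioo.symm.trans_le (measure_mono hlower))
  rw [hvol, sub_zero, cdfFun, ENNReal.ofReal_toReal (measure_ne_top μ _)]

end Quantile

section HoeffdingKernel

noncomputable def hoeffdingKernel (x s : ℝ) : ℝ := (Ioi s).indicator 1 x - (Ioi s).indicator 1 0

lemma hoeffdingKernel_eq (x s : ℝ) :
    hoeffdingKernel x s = (Ico 0 x).indicator 1 s - (Ico x 0).indicator 1 s := by
  simp only [hoeffdingKernel, indicator_apply, mem_Ioi, mem_Ico, Pi.one_apply]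
  split_ifs <;> grind

lemma abs_hoeffdingKernel (x s : ℝ) :
    |hoeffdingKernel x s| = (Ico 0 x).indicator 1 s + (Ico x 0).indicator 1 s := by
  simp only [hoeffdingKernel, indicator_apply, mem_Ioi, mem_Ico, Pi.one_apply]
  split_ifs <;> grind

lemma measurable_hoeffdingKernel : Measurable (Function.uncurry hoeffdingKernel) := by
  have hlt : MeasurableSet {p : ℝ × ℝ | p.2 < p.1} :=
    measurableSet_lt measurable_snd measurable_fst
  have hneg : MeasurableSet {p : ℝ × ℝ | p.2 < 0} :=
    measurableSet_lt measurable_snd measurable_const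
  exact (measurable_const.indicator hlt).sub (measurable_const.indicator hneg)

lemma integrable_indicator_Ico_one (a b : ℝ) : Integrable ((Ico a b).indicator (1 : ℝ → ℝ)) := by
  rw [integrable_indicator_iff measurableSet_Ico]
  exact integrableOn_const measure_Ico_lt_top.ne

lemma integrable_hoeffdingKernel (x : ℝ) : Integrable (hoeffdingKernel x) := by
  simp only [funext (hoeffdingKernel_eq x)]
  exact (integrable_indicator_Ico_one 0 x).sub (integrable_indicator_Ico_one x 0)

lemma integral_hoeffdingKernel (x : ℝ) : ∫ s, hoeffdingKernel x s = x := by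
  simp only [hoeffdingKernel_eq]
  rw [integral_sub (integrable_indicator_Ico_one 0 x) (integrable_indicator_Ico_one x 0),
    integral_indicator_one measurableSet_Ico, integral_indicator_one measurableSet_Ico,
    Real.volume_real_Ico, Real.volume_real_Ico]
  rcases le_total 0 x with h | h <;> simp [h]

lemma integral_abs_hoeffdingKernel (x : ℝ) : ∫ s, |hoeffdingKernel x s| = |x| := by
  simp only [abs_hoeffdingKernel]
  rw [integral_add (integrable_indicator_Ico_one 0 x) (integrable_indicator_Ico_one x 0),
    integral_indicator_one measurableSet_Ico, integral_indicator_one measurableSet_Ico,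
    Real.volume_real_Ico, Real.volume_real_Ico]
  rcases le_total 0 x with h | h <;> simp [h, abs_of_nonneg, abs_of_nonpos]

variable {σ : Measure (ℝ × ℝ)}

lemma integrable_fst_mul_snd (hx : Integrable (fun z : ℝ × ℝ => z.1 ^ 2) σ)
    (hy : Integrable (fun z : ℝ × ℝ => z.2 ^ 2) σ) :
    Integrable (fun z : ℝ × ℝ => z.1 * z.2) σ := by
  refine (hx.add hy).mono' (by fun_prop) (ae_of_all _ fun z => ?_)
  rw [Pi.add_apply, Real.norm_eq_abs, abs_mul]
  nlinarith [sq_nonneg (|z.1| - |z.2|), sq_abs z.1, sq_abs z.2]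

lemma integrable_hoeffdingKernel_mul_prod [SFinite σ]
    (hxy : Integrable (fun z : ℝ × ℝ => z.1 * z.2) σ) :
    Integrable (fun p : (ℝ × ℝ) × (ℝ × ℝ) =>
      hoeffdingKernel p.1.1 p.2.1 * hoeffdingKernel p.1.2 p.2.2) (σ.prod (volume.prod volume)) := by
  have hmeas : Measurable fun p : (ℝ × ℝ) × (ℝ × ℝ) =>
      hoeffdingKernel p.1.1 p.2.1 * hoeffdingKernel p.1.2 p.2.2 :=
    (measurable_hoeffdingKernel.comp (measurable_fst.fst.prodMk measurable_snd.fst)).mul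
      (measurable_hoeffdingKernel.comp (measurable_fst.snd.prodMk measurable_snd.snd))
  refine (integrable_prod_iff hmeas.aestronglyMeasurable).2
    ⟨ae_of_all _ fun z =>
      (integrable_hoeffdingKernel z.1).mul_prod (integrable_hoeffdingKernel z.2),
      hxy.abs.congr (ae_of_all _ fun z => ?_)⟩
  simp only [norm_mul, Real.norm_eq_abs]
  rw [integral_prod_mul (fun s => |hoeffdingKernel z.1 s|) (fun t => |hoeffdingKernel z.2 t|),
    integral_abs_hoeffdingKernel, integral_abs_hoeffdingKernel, abs_mul]

theorem integral_fst_mul_snd_eq_integral_hoeffdingKernel [SFinite σ]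
    (hxy : Integrable (fun z : ℝ × ℝ => z.1 * z.2) σ) :
    ∫ z, z.1 * z.2 ∂σ = ∫ st : ℝ × ℝ, ∫ z, hoeffdingKernel z.1 st.1 * hoeffdingKernel z.2 st.2 ∂σ
      ∂(volume.prod volume) := by
  calc ∫ z, z.1 * z.2 ∂σ
      = ∫ z, ∫ st : ℝ × ℝ, hoeffdingKernel z.1 st.1 * hoeffdingKernel z.2 st.2
          ∂(volume.prod volume) ∂σ := by
        simp only [integral_prod_mul, integral_hoeffdingKernel]
    _ = _ := integral_integral_swap (integrable_hoeffdingKernel_mul_prod hxy)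

end HoeffdingKernel

structure IsCoupling (σ : Measure (ℝ × ℝ)) (μ ν : Measure ℝ) : Prop where
  map_fst : σ.map Prod.fst = μ
  map_snd : σ.map Prod.snd = ν

namespace IsCoupling

variable {σ : Measure (ℝ × ℝ)} {μ ν : Measure ℝ}

lemma isProbabilityMeasure [IsProbabilityMeasure μ] (h : IsCoupling σ μ ν) :
    IsProbabilityMeasure σ :=
  have : IsProbabilityMeasure (σ.map Prod.fst) := h.map_fst ▸ inferInstance
  Measure.isProbabilityMeasure_of_map Prod.fst

lemma measure_prod_univ (h : IsCoupling σ μ ν) {A : Set ℝ} (hA : MeasurableSet A) :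
    σ (A ×ˢ univ) = μ A := by
  rw [← h.map_fst, Measure.map_apply measurable_fst hA, prod_univ]

lemma measure_univ_prod (h : IsCoupling σ μ ν) {B : Set ℝ} (hB : MeasurableSet B) :
    σ (univ ×ˢ B) = ν B := by
  rw [← h.map_snd, Measure.map_apply measurable_snd hB, univ_prod]

lemma integral_fst (h : IsCoupling σ μ ν) {f : ℝ → ℝ} (hf : AEStronglyMeasurable f μ) :
    ∫ z, f z.1 ∂σ = ∫ x, f x ∂μ := by
  rw [← h.map_fst] at hf ⊢
  exact (integral_map measurable_fst.aemeasurable hf).symm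

lemma integral_snd (h : IsCoupling σ μ ν) {f : ℝ → ℝ} (hf : AEStronglyMeasurable f ν) :
    ∫ z, f z.2 ∂σ = ∫ y, f y ∂ν := by
  rw [← h.map_snd] at hf ⊢
  exact (integral_map measurable_snd.aemeasurable hf).symm

lemma integrable_fst_sq (h : IsCoupling σ μ ν) (hμ : Integrable (fun x => x ^ 2) μ) :
    Integrable (fun z : ℝ × ℝ => z.1 ^ 2) σ :=
  (h.map_fst ▸ hμ).comp_measurable measurable_fst

lemma integrable_snd_sq (h : IsCoupling σ μ ν) (hν : Integrable (fun y => y ^ 2) ν) :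
    Integrable (fun z : ℝ × ℝ => z.2 ^ 2) σ :=
  (h.map_snd ▸ hν).comp_measurable measurable_snd

/-- Only the quadrant term depends on `σ` beyond its marginals. -/
lemma integral_hoeffdingKernel_mul [IsProbabilityMeasure μ] (h : IsCoupling σ μ ν) (s t : ℝ) :
    ∫ z, hoeffdingKernel z.1 s * hoeffdingKernel z.2 t ∂σ
      = σ.real (Ioi s ×ˢ Ioi t) - (Ioi t).indicator 1 0 * μ.real (Ioi s)
        - (Ioi s).indicator 1 0 * ν.real (Ioi t)
        + (Ioi s).indicator 1 0 * (Ioi t).indicator 1 0 := by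
  have := h.isProbabilityMeasure
  set c : ℝ := (Ioi s).indicator 1 0
  set d : ℝ := (Ioi t).indicator 1 0
  have hQ : MeasurableSet (Ioi s ×ˢ Ioi t) := measurableSet_Ioi.prod measurableSet_Ioi
  have hA : MeasurableSet (Ioi s ×ˢ (univ : Set ℝ)) := measurableSet_Ioi.prod MeasurableSet.univ
  have hB : MeasurableSet ((univ : Set ℝ) ×ˢ Ioi t) := MeasurableSet.univ.prod measurableSet_Ioi
  have hint {E : Set (ℝ × ℝ)} (hE : MeasurableSet E) : Integrable (E.indicator 1) σ :=
    (integrable_const (1 : ℝ)).indicator hE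
  have hexpand : (fun z : ℝ × ℝ => hoeffdingKernel z.1 s * hoeffdingKernel z.2 t)
      = fun z => (Ioi s ×ˢ Ioi t).indicator 1 z - d * (Ioi s ×ˢ univ).indicator 1 z
        - c * (univ ×ˢ Ioi t).indicator 1 z + c * d := by
    ext ⟨x, y⟩
    simp only [hoeffdingKernel, indicator_prod_one, indicator_univ, Pi.one_apply, c, d]
    ring
  have hQA : Integrable (fun z => (Ioi s ×ˢ Ioi t).indicator 1 z
      - d * (Ioi s ×ˢ univ).indicator 1 z) σ := (hint hQ).sub ((hint hA).const_mul d)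
  have hQAB : Integrable (fun z => (Ioi s ×ˢ Ioi t).indicator 1 z
      - d * (Ioi s ×ˢ univ).indicator 1 z - c * (univ ×ˢ Ioi t).indicator 1 z) σ :=
    hQA.sub ((hint hB).const_mul c)
  rw [hexpand, integral_add hQAB (integrable_const _),
    integral_sub hQA ((hint hB).const_mul c), integral_sub (hint hQ) ((hint hA).const_mul d),
    integral_const_mul, integral_const_mul, integral_indicator_one hQ, integral_indicator_one hA,
    integral_indicator_one hB, integral_const]
  simp [measureReal_def, h.measure_prod_univ measurableSet_Ioi,
    h.measure_univ_prod measurableSet_Ioi]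

lemma measure_prod_le_left (h : IsCoupling σ μ ν) {A : Set ℝ} (hA : MeasurableSet A) (B : Set ℝ) :
    σ (A ×ˢ B) ≤ μ A :=
  (measure_mono (prod_mono subset_rfl (subset_univ B))).trans_eq (h.measure_prod_univ hA)

lemma measure_prod_le_right (h : IsCoupling σ μ ν) (A : Set ℝ) {B : Set ℝ} (hB : MeasurableSet B) :
    σ (A ×ˢ B) ≤ ν B :=
  (measure_mono (prod_mono (subset_univ A) subset_rfl)).trans_eq (h.measure_univ_prod hB)

theorem integral_fst_mul_snd_le [IsProbabilityMeasure μ] {σ' : Measure (ℝ × ℝ)}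
    (h : IsCoupling σ μ ν) (h' : IsCoupling σ' μ ν)
    (hxy : Integrable (fun z : ℝ × ℝ => z.1 * z.2) σ)
    (hxy' : Integrable (fun z : ℝ × ℝ => z.1 * z.2) σ')
    (hle : ∀ s t, σ (Ioi s ×ˢ Ioi t) ≤ σ' (Ioi s ×ˢ Ioi t)) :
    ∫ z, z.1 * z.2 ∂σ ≤ ∫ z, z.1 * z.2 ∂σ' := by
  have := h.isProbabilityMeasure
  have := h'.isProbabilityMeasure
  rw [integral_fst_mul_snd_eq_integral_hoeffdingKernel hxy,
    integral_fst_mul_snd_eq_integral_hoeffdingKernel hxy']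
  refine integral_mono (integrable_hoeffdingKernel_mul_prod hxy).integral_prod_right
    (integrable_hoeffdingKernel_mul_prod hxy').integral_prod_right fun st => ?_
  rw [h.integral_hoeffdingKernel_mul, h'.integral_hoeffdingKernel_mul]
  gcongr
  exact ENNReal.toReal_mono (measure_ne_top _ _) (hle st.1 st.2)

lemma integral_sub_sq (h : IsCoupling σ μ ν)
    (hx : Integrable (fun z : ℝ × ℝ => z.1 ^ 2) σ) (hy : Integrable (fun z : ℝ × ℝ => z.2 ^ 2) σ) :
    ∫ z, (z.1 - z.2) ^ 2 ∂σ = ∫ x, x ^ 2 ∂μ + ∫ y, y ^ 2 ∂ν - 2 * ∫ z, z.1 * z.2 ∂σ := by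
  have hxy := (integrable_fst_mul_snd hx hy).const_mul 2
  calc ∫ z, (z.1 - z.2) ^ 2 ∂σ = ∫ z, (z.1 ^ 2 + z.2 ^ 2) - 2 * (z.1 * z.2) ∂σ := by
        congr 1 with z
        ring
    _ = _ := by
        rw [integral_sub (f := fun z => z.1 ^ 2 + z.2 ^ 2) (hx.add hy) hxy, integral_add hx hy,
          integral_const_mul, h.integral_fst (f := (· ^ 2)) (by fun_prop),
          h.integral_snd (f := (· ^ 2)) (by fun_prop)]

end IsCoupling

section QuantileCoupling

lemma restrict_preimage_Ioi_inter_eq_min {α β : Type*} [MeasurableSpace α] [LinearOrder α]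
    [LinearOrder β] {ρ : Measure α} {I : Set α} (hI : MeasurableSet I) {f g : α → β}
    (hf : MonotoneOn f I) (hg : MonotoneOn g I) (a b : β) :
    ρ.restrict I (f ⁻¹' Ioi a ∩ g ⁻¹' Ioi b)
      = min (ρ.restrict I (f ⁻¹' Ioi a)) (ρ.restrict I (g ⁻¹' Ioi b)) := by
  simp only [Measure.restrict_apply' hI]
  have hnested : f ⁻¹' Ioi a ∩ I ⊆ g ⁻¹' Ioi b ∨ g ⁻¹' Ioi b ∩ I ⊆ f ⁻¹' Ioi a := by
    simp only [or_iff_not_imp_left, not_subset]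
    rintro ⟨u, ⟨hfu, hu⟩, hgu⟩ v ⟨hgv, hv⟩
    by_contra hfv
    rcases le_total u v with huv | hvu
    · exact hfv ((hf hu hv huv).trans_lt' hfu)
    · exact hgu ((hg hv hu hvu).trans_lt' hgv)
  rcases hnested with hsub | hsub
  · rw [inter_right_comm, inter_eq_left.2 hsub,
      min_eq_left (measure_mono (subset_inter hsub inter_subset_right))]
  · rw [inter_assoc, inter_eq_right.2 hsub,
      min_eq_right (measure_mono (subset_inter hsub inter_subset_right))]

noncomputable def quantileCoupling (μ ν : Measure ℝ) : Measure (ℝ × ℝ) :=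
  (volume.restrict (Ioo 0 1)).map fun u => (quantileFun μ u, quantileFun ν u)

variable (μ ν : Measure ℝ) [IsProbabilityMeasure μ] [IsProbabilityMeasure ν]

lemma aemeasurable_quantileFun_prodMk :
    AEMeasurable (fun u => (quantileFun μ u, quantileFun ν u)) (volume.restrict (Ioo 0 1)) :=
  (aemeasurable_quantileFun μ).prodMk (aemeasurable_quantileFun ν)

lemma isCoupling_quantileCoupling : IsCoupling (quantileCoupling μ ν) μ ν where
  map_fst := by
    rw [quantileCoupling, AEMeasurable.map_map_of_aemeasurable measurable_fst.aemeasurable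
      (aemeasurable_quantileFun_prodMk μ ν)]
    exact map_quantileFun μ
  map_snd := by
    rw [quantileCoupling, AEMeasurable.map_map_of_aemeasurable measurable_snd.aemeasurable
      (aemeasurable_quantileFun_prodMk μ ν)]
    exact map_quantileFun ν

lemma quantileCoupling_prod_Ioi (s t : ℝ) :
    quantileCoupling μ ν (Ioi s ×ˢ Ioi t) = min (μ (Ioi s)) (ν (Ioi t)) := by
  rw [quantileCoupling, Measure.map_apply_of_aemeasurable (aemeasurable_quantileFun_prodMk μ ν)
      (measurableSet_Ioi.prod measurableSet_Ioi), mk_preimage_prod,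
    restrict_preimage_Ioi_inter_eq_min measurableSet_Ioo (monotoneOn_quantileFun μ)
      (monotoneOn_quantileFun ν),
    ← Measure.map_apply_of_aemeasurable (aemeasurable_quantileFun μ) measurableSet_Ioi,
    ← Measure.map_apply_of_aemeasurable (aemeasurable_quantileFun ν) measurableSet_Ioi,
    map_quantileFun, map_quantileFun]

theorem integral_quantileCoupling_sub_sq :
    ∫ z, (z.1 - z.2) ^ 2 ∂quantileCoupling μ ν
      = ∫ u in Ioo 0 1, (quantileFun μ u - quantileFun ν u) ^ 2 :=
  integral_map (aemeasurable_quantileFun_prodMk μ ν) (by fun_prop)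

variable {μ ν}

theorem IsCoupling.integral_quantileCoupling_sub_sq_le {σ : Measure (ℝ × ℝ)} (h : IsCoupling σ μ ν)
    (hμ : Integrable (fun x => x ^ 2) μ) (hν : Integrable (fun y => y ^ 2) ν) :
    ∫ z, (z.1 - z.2) ^ 2 ∂quantileCoupling μ ν ≤ ∫ z, (z.1 - z.2) ^ 2 ∂σ := by
  have hQ := isCoupling_quantileCoupling μ ν
  have hx := h.integrable_fst_sq hμ
  have hy := h.integrable_snd_sq hν
  have hxQ := hQ.integrable_fst_sq hμ
  have hyQ := hQ.integrable_snd_sq hν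
  have hfrechet (s t : ℝ) : σ (Ioi s ×ˢ Ioi t) ≤ quantileCoupling μ ν (Ioi s ×ˢ Ioi t) := by
    rw [quantileCoupling_prod_Ioi]
    exact le_min (h.measure_prod_le_left measurableSet_Ioi _)
      (h.measure_prod_le_right _ measurableSet_Ioi)
  rw [h.integral_sub_sq hx hy, hQ.integral_sub_sq hxQ hyQ]
  linarith [h.integral_fst_mul_snd_le hQ (integrable_fst_mul_snd hx hy)
    (integrable_fst_mul_snd hxQ hyQ) hfrechet]

end QuantileCoupling

end OneDimOptimalTransport

open OneDimOptimalTransport in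
/-- for probability measures `μ, ν` on `ℝ` with finite second moments,
the optimal value of the 1D quadratic optimal transport problem equals
`∫₀¹ (F_μ⁻¹(s) − F_ν⁻¹(s))² ds`. -/
theorem oneD_optimal_transport_value (μ ν : Measure ℝ)
    [IsProbabilityMeasure μ] [IsProbabilityMeasure ν]
    (hμ : Integrable (fun x => x ^ 2) μ) (hν : Integrable (fun x => x ^ 2) ν) :
    sInf {c : ℝ | ∃ σ : Measure (ℝ × ℝ),
        σ.map Prod.fst = μ ∧ σ.map Prod.snd = ν ∧
        c = ∫ z : ℝ × ℝ, (z.1 - z.2) ^ 2 ∂σ} =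
      ∫ s in Set.Ioo (0 : ℝ) 1, (quantileFun μ s - quantileFun ν s) ^ 2 := by
  have hQ := isCoupling_quantileCoupling μ ν
  refine IsLeast.csInf_eq ⟨⟨_, hQ.map_fst, hQ.map_snd, (integral_quantileCoupling_sub_sq μ ν).symm⟩,
    ?_⟩
  rintro _ ⟨σ, hσ₁, hσ₂, rfl⟩
  rw [← integral_quantileCoupling_sub_sq]
  exact IsCoupling.integral_quantileCoupling_sub_sq_le ⟨hσ₁, hσ₂⟩ hμ hν
end
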